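/- Let A, B be finite types, ρ a density matrix on A × B, and define the SDP value f̂(ρ) = sup { (1/2)·tr(X + Xᴴ) : C, D, M, N positive semidefinite, C + D = M^{T_B} − N^{T_B}, tr(M + N) ≤ 1, and the block matrix [[ρ, X],[Xᴴ, C^{T_B} − D^{T_B}]] positive semidefinite }. Then for every σ ∈ PPT#_2(A:B), √F(ρ,σ) ≤ f̂(ρ). In particular, E_{#,2}^{1/2}(ρ) = −log sup_{σ ∈ PPT#_2} F(ρ,σ) ≥ −2 log f̂(ρ). -/

import Mathlib

open Matrix
open scoped ComplexOrder

/-- Total positive semidefinite square root: the PSD square root of `M` if `M` is PSD,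
and junk value `0` otherwise. -/
noncomputable def msqrt {n : Type*} [Fintype n] [DecidableEq n]
    (M : Matrix n n ℂ) : Matrix n n ℂ :=
  letI := Classical.dec M.PosSemidef
  if h : M.PosSemidef then
    (h.1.eigenvectorUnitary : Matrix n n ℂ) * diagonal ((↑) ∘ (√·) ∘ h.1.eigenvalues) *
      (star (h.1.eigenvectorUnitary : Matrix n n ℂ))
  else 0

/-- The trace norm `‖M‖₁ = tr √(Mᴴ M)` of a complex matrix, as a real number. -/
noncomputable def traceNorm {n : Type*} [Fintype n] [DecidableEq n]
    (M : Matrix n n ℂ) : ℝ :=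
  (msqrt (Mᴴ * M)).trace.re

/-- The partial transpose over the second party `B`:
`M^{T_B}((a,b),(a',b')) = M((a,b'),(a',b))`. -/
def ptB {A B : Type*} (M : Matrix (A × B) (A × B) ℂ) : Matrix (A × B) (A × B) ℂ :=
  fun x y => M (x.1, y.2) (y.1, x.2)

/-- The matrix absolute value `|M| = √(Mᴴ M)`. -/
noncomputable def matAbs {n : Type*} [Fintype n] [DecidableEq n]
    (M : Matrix n n ℂ) : Matrix n n ℂ :=
  msqrt (Mᴴ * M)

/-- Uhlmann fidelity `F(ρ,σ) = (tr √(√σ ρ √σ))²` between positive semidefinite matrices. -/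
noncomputable def fidelity {n : Type*} [Fintype n] [DecidableEq n]
    (ρ σ : Matrix n n ℂ) : ℝ :=
  ((msqrt (msqrt σ * ρ * msqrt σ)).trace.re) ^ 2

/-- The set `PPT₂(A:B)`: positive semidefinite `σ` such that there exists `ω` with
`−ω ⪯ σ^{T_B} ⪯ ω` and `‖ω^{T_B}‖₁ ≤ 1`. -/
def PPT2set {A B : Type*} [Fintype A] [Fintype B] [DecidableEq A] [DecidableEq B] :
    Set (Matrix (A × B) (A × B) ℂ) :=
  {σ | σ.PosSemidef ∧ ∃ ω : Matrix (A × B) (A × B) ℂ,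
    (ω - ptB σ).PosSemidef ∧ (ω + ptB σ).PosSemidef ∧ traceNorm (ptB ω) ≤ 1}

/-- The set `PPT#₂(A:B)`: positive semidefinite `σ` such that there exists `ω` with
`|σ^{T_B}| ⪯ ω` and `‖ω^{T_B}‖₁ ≤ 1`. -/
def PPThash2set {A B : Type*} [Fintype A] [Fintype B] [DecidableEq A] [DecidableEq B] :
    Set (Matrix (A × B) (A × B) ℂ) :=
  {σ | σ.PosSemidef ∧ ∃ ω : Matrix (A × B) (A × B) ℂ,
    (ω - matAbs (ptB σ)).PosSemidef ∧ traceNorm (ptB ω) ≤ 1}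

/-- The SDP value `f̂(ρ)`: the supremum of `(1/2)·tr(X + Xᴴ)` over `C, D, M, N` positive
semidefinite with `C + D = M^{T_B} − N^{T_B}`, `tr(M + N) ≤ 1`, and
`[[ρ, X],[Xᴴ, C^{T_B} − D^{T_B}]]` positive semidefinite. -/
noncomputable def fhat {A B : Type*} [Fintype A] [Fintype B] [DecidableEq A] [DecidableEq B]
    (ρ : Matrix (A × B) (A × B) ℂ) : ℝ :=
  sSup {v : ℝ | ∃ X C D M N : Matrix (A × B) (A × B) ℂ,
    C.PosSemidef ∧ D.PosSemidef ∧ M.PosSemidef ∧ N.PosSemidef ∧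
    C + D = ptB M - ptB N ∧
    ((M + N).trace).re ≤ 1 ∧
    (Matrix.fromBlocks ρ X Xᴴ (ptB C - ptB D)).PosSemidef ∧
    v = (1 / 2) * ((X + Xᴴ).trace).re}

/-!
Let `σ ∈ PPT#₂(A:B)` with witness `ω`, and write `a⁺, a⁻` for the positive and negative parts of a
Hermitian matrix. Then `C, D = ½(ω - |σ^{T_B}|) + (σ^{T_B})^±` and `M, N = (ω^{T_B})^±` satisfy
the constraints of `f̂(ρ)`, with `C + D = ω`, `C^{T_B} - D^{T_B} = σ` and `tr(M + N) = ‖ω^{T_B}‖₁`.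
The block constraint is then met by Uhlmann's construction: with `H = √σ ρ √σ` and
`U = √ρ √σ H^{-1/2}` (pseudo-inverse), `UᴴU ≤ 1`, so `X = √ρ U √σ` makes `[[ρ, X], [Xᴴ, σ]] ⪰ 0`,
and `tr X = tr(H H^{-1/2}) = tr √H = √F(ρ,σ)`.

For the logarithmic bound, the maximally mixed state lies in `PPT#₂(A:B)` and has positive fidelity
with `ρ`, so the supremum of the fidelities is positive and at most `f̂(ρ)²`.
-/

open Matrix
open scoped MatrixOrder

section SquareRoot

variable {n : Type*} [Fintype n] [DecidableEq n]

lemma msqrt_eq_cfcSqrt (M : Matrix n n ℂ) : msqrt M = CFC.sqrt M := by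
  by_cases hM : 0 ≤ M
  · have hM' := nonneg_iff_posSemidef.mp hM
    rw [msqrt, dif_pos hM', CFC.sqrt_eq_real_sqrt M hM, cfcₙ_eq_cfc, hM'.1.cfc_eq, IsHermitian.cfc,
      Unitary.conjStarAlgAut_apply]
    rfl
  · rw [msqrt, dif_neg (mt nonneg_iff_posSemidef.mpr hM), CFC.sqrt_of_not_nonneg hM]

lemma matAbs_eq_cfcAbs (M : Matrix n n ℂ) : matAbs M = CFC.abs M :=
  msqrt_eq_cfcSqrt _

lemma traceNorm_eq_re_trace_matAbs (M : Matrix n n ℂ) : traceNorm M = (matAbs M).trace.re := rfl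

lemma cfcSqrt_smul_one {c : ℝ} (hc : 0 ≤ c) :
    CFC.sqrt (c • (1 : Matrix n n ℂ)) = √c • 1 := by
  refine CFC.sqrt_unique ?_ (smul_nonneg (Real.sqrt_nonneg c) zero_le_one)
  rw [smul_mul_smul_comm, Real.mul_self_sqrt hc, one_mul]

lemma sqrt_fidelity_eq (ρ σ : Matrix n n ℂ) :
    √(fidelity ρ σ) = (CFC.sqrt (CFC.sqrt σ * ρ * CFC.sqrt σ)).trace.re := by
  rw [fidelity, msqrt_eq_cfcSqrt, msqrt_eq_cfcSqrt, Real.sqrt_sq]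
  exact (Complex.nonneg_iff.mp (nonneg_iff_posSemidef.mp (CFC.sqrt_nonneg _)).trace_nonneg).1

lemma fidelity_pos {ρ σ : Matrix n n ℂ} (hρ : 0 ≤ ρ) (h : CFC.sqrt σ * ρ * CFC.sqrt σ ≠ 0) :
    0 < fidelity ρ σ := by
  set H := CFC.sqrt σ * ρ * CFC.sqrt σ
  have hH : 0 ≤ H := conjugate_nonneg_of_nonneg hρ (CFC.sqrt_nonneg σ)
  have hsqrtH := nonneg_iff_posSemidef.mp (CFC.sqrt_nonneg H)
  have htrace : (CFC.sqrt H).trace ≠ 0 := by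
    rwa [Ne, hsqrtH.trace_eq_zero_iff, CFC.sqrt_eq_zero_iff H hH]
  obtain ⟨hre, him⟩ := Complex.nonneg_iff.mp hsqrtH.trace_nonneg
  have hre' : 0 < (CFC.sqrt H).trace.re :=
    hre.lt_of_ne fun h0 => htrace (Complex.ext h0.symm him.symm)
  rw [← Real.sqrt_pos, sqrt_fidelity_eq]
  exact hre'

end SquareRoot

section Uhlmann

variable {n : Type*} [Fintype n] [DecidableEq n]

lemma cfc_mul_matrix (H : Matrix n n ℂ) (f g : ℝ → ℝ) :
    cfc (fun t => f t * g t) H = cfc f H * cfc g H :=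
  cfc_mul f g H (H.finite_real_spectrum.continuousOn f) (H.finite_real_spectrum.continuousOn g)

lemma exists_contraction_trace_eq_trace_sqrt {ρ : Matrix n n ℂ} (hρ : 0 ≤ ρ) (σ : Matrix n n ℂ) :
    ∃ U : Matrix n n ℂ, Uᴴ * U ≤ 1 ∧
      (CFC.sqrt ρ * U * CFC.sqrt σ).trace = (CFC.sqrt (CFC.sqrt σ * ρ * CFC.sqrt σ)).trace := by
  set r := CFC.sqrt ρ
  set s := CFC.sqrt σ
  set H := s * ρ * s
  have hr : rᴴ = r := (CFC.sqrt_nonneg ρ).isSelfAdjoint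
  have hs : sᴴ = s := (CFC.sqrt_nonneg σ).isSelfAdjoint
  have hrr : r * r = ρ := CFC.sqrt_mul_sqrt_self ρ hρ
  have hH : 0 ≤ H := conjugate_nonneg_of_nonneg hρ (CFC.sqrt_nonneg σ)
  -- `(√0)⁻¹ = 0`, so `R` is the pseudo-inverse of `√H`.
  set R := cfc (fun t : ℝ => (√t)⁻¹) H
  have hR : Rᴴ = R := IsSelfAdjoint.star_eq (cfc_predicate _ H)
  have hHR : H * R = CFC.sqrt H := by
    rw [CFC.sqrt_eq_real_sqrt H hH, cfcₙ_eq_cfc]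
    conv_lhs => rw [← cfc_id' ℝ H]
    rw [← cfc_mul_matrix]
    exact cfc_congr fun t _ => Real.div_sqrt
  refine ⟨r * s * R, ?_, ?_⟩
  · have hUU : (r * s * R)ᴴ * (r * s * R) = cfc (fun t : ℝ => (√t)⁻¹ * t * (√t)⁻¹) H := by
      calc (r * s * R)ᴴ * (r * s * R) = R * H * R := by
            rw [conjTranspose_mul, conjTranspose_mul, hr, hs, hR]
            simp only [H, ← hrr, mul_assoc]
        _ = _ := by rw [cfc_mul_matrix, cfc_mul_matrix, cfc_id' ℝ H]
    rw [hUU]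
    refine cfc_le_one _ H fun t ht => ?_
    have ht0 : 0 ≤ t := spectrum_nonneg_of_nonneg hH ht
    rw [mul_comm, ← mul_assoc, ← mul_inv, ← sq, Real.sq_sqrt ht0]
    exact inv_mul_le_one_of_le₀ le_rfl ht0
  · calc (r * (r * s * R) * s).trace = (H * R).trace := by
          rw [trace_mul_cycle]
          simp only [H, ← hrr, mul_assoc]
      _ = (CFC.sqrt H).trace := by rw [hHR]

lemma posSemidef_fromBlocks_of_contraction {U : Matrix n n ℂ} (hU : Uᴴ * U ≤ 1)
    (r s : Matrix n n ℂ) :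
    (fromBlocks (rᴴ * r) (rᴴ * U * s) (rᴴ * U * s)ᴴ (sᴴ * s)).PosSemidef := by
  have hblock : (fromBlocks 1 U Uᴴ (1 : Matrix n n ℂ)).PosSemidef := by
    let : Invertible (1 : Matrix n n ℂ) := invertibleOne
    rw [PosDef.fromBlocks₁₁ U 1 PosDef.one, inv_one, Matrix.mul_one]
    exact hU
  convert hblock.conjTranspose_mul_mul_same (fromBlocks r 0 0 s) using 1
  simp [fromBlocks_conjTranspose, fromBlocks_multiply, conjTranspose_mul, mul_assoc]

lemma exists_posSemidef_fromBlocks_re_trace_eq_sqrt_fidelity {ρ σ : Matrix n n ℂ} (hρ : 0 ≤ ρ)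
    (hσ : 0 ≤ σ) :
    ∃ X : Matrix n n ℂ, (fromBlocks ρ X Xᴴ σ).PosSemidef ∧ X.trace.re = √(fidelity ρ σ) := by
  obtain ⟨U, hU, htrace⟩ := exists_contraction_trace_eq_trace_sqrt hρ σ
  have hr : (CFC.sqrt ρ)ᴴ = CFC.sqrt ρ := (CFC.sqrt_nonneg ρ).isSelfAdjoint
  have hs : (CFC.sqrt σ)ᴴ = CFC.sqrt σ := (CFC.sqrt_nonneg σ).isSelfAdjoint
  refine ⟨CFC.sqrt ρ * U * CFC.sqrt σ, ?_, by rw [htrace, sqrt_fidelity_eq]⟩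
  have hblock := posSemidef_fromBlocks_of_contraction hU (CFC.sqrt ρ) (CFC.sqrt σ)
  rwa [hr, hs, CFC.sqrt_mul_sqrt_self ρ hρ, CFC.sqrt_mul_sqrt_self σ hσ] at hblock

lemma re_trace_add_conjTranspose_le {ρ X Q : Matrix n n ℂ}
    (h : (fromBlocks ρ X Xᴴ Q).PosSemidef) :
    (X + Xᴴ).trace.re ≤ ρ.trace.re + Q.trace.re := by
  have hnonneg := (h.mul_mul_conjTranspose_same (fromCols (1 : Matrix n n ℂ) (-1))).trace_nonneg
  rw [conjTranspose_fromCols_eq_fromRows_conjTranspose, fromCols_mul_fromBlocks,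
    fromCols_mul_fromRows] at hnonneg
  have hre := (Complex.nonneg_iff.mp hnonneg).1
  simp only [trace_add, trace_neg, Matrix.one_mul, Matrix.neg_mul, conjTranspose_one,
    conjTranspose_neg, Matrix.mul_one, Matrix.mul_neg, Complex.add_re, Complex.neg_re] at hre ⊢
  linarith

end Uhlmann

section PartialTranspose

variable {A B : Type*}

lemma ptB_ptB (M : Matrix (A × B) (A × B) ℂ) : ptB (ptB M) = M := rfl

lemma ptB_sub (M N : Matrix (A × B) (A × B) ℂ) : ptB (M - N) = ptB M - ptB N := rfl

lemma ptB_smul (c : ℝ) (M : Matrix (A × B) (A × B) ℂ) : ptB (c • M) = c • ptB M := rfl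

lemma trace_ptB [Fintype A] [Fintype B] (M : Matrix (A × B) (A × B) ℂ) :
    (ptB M).trace = M.trace := rfl

lemma ptB_conjTranspose (M : Matrix (A × B) (A × B) ℂ) : ptB Mᴴ = (ptB M)ᴴ := rfl

lemma IsSelfAdjoint.ptB {M : Matrix (A × B) (A × B) ℂ} (hM : IsSelfAdjoint M) :
    IsSelfAdjoint (ptB M) := by
  rw [IsSelfAdjoint, star_eq_conjTranspose, ← ptB_conjTranspose, ← star_eq_conjTranspose, hM]

lemma ptB_one [DecidableEq A] [DecidableEq B] : ptB (1 : Matrix (A × B) (A × B) ℂ) = 1 := by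
  ext x y
  simp only [ptB, one_apply, Prod.ext_iff, eq_comm (a := x.2)]

end PartialTranspose

section SDP

variable {A B : Type*} [Fintype A] [Fintype B] [DecidableEq A] [DecidableEq B]

lemma exists_ptB_decomposition_of_mem_PPThash2set {σ : Matrix (A × B) (A × B) ℂ}
    (hσ : σ ∈ PPThash2set) :
    ∃ C D M N : Matrix (A × B) (A × B) ℂ, 0 ≤ C ∧ 0 ≤ D ∧ 0 ≤ M ∧ 0 ≤ N ∧
      C + D = ptB M - ptB N ∧ (M + N).trace.re ≤ 1 ∧ ptB C - ptB D = σ := by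
  obtain ⟨hσ, ω, hω, hnorm⟩ := hσ
  rw [traceNorm_eq_re_trace_matAbs, matAbs_eq_cfcAbs] at hnorm
  have hσT : IsSelfAdjoint (ptB σ) := hσ.1.isSelfAdjoint.ptB
  have hgap : 0 ≤ ω - CFC.abs (ptB σ) := by
    rw [← matAbs_eq_cfcAbs]
    exact nonneg_iff_posSemidef.mpr hω
  have hωT : IsSelfAdjoint (ptB ω) := by
    have hω' := hgap.isSelfAdjoint.add (CFC.abs_nonneg (ptB σ)).isSelfAdjoint
    rw [sub_add_cancel] at hω'
    exact hω'.ptB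
  set E := (2⁻¹ : ℝ) • (ω - CFC.abs (ptB σ))
  refine ⟨E + (ptB σ)⁺, E + (ptB σ)⁻, (ptB ω)⁺, (ptB ω)⁻, ?_, ?_, CFC.posPart_nonneg _,
    CFC.negPart_nonneg _, ?_, ?_, ?_⟩
  · exact add_nonneg (smul_nonneg (by norm_num) hgap) (CFC.posPart_nonneg _)
  · exact add_nonneg (smul_nonneg (by norm_num) hgap) (CFC.negPart_nonneg _)
  · rw [← ptB_sub, CFC.posPart_sub_negPart _ hωT, ptB_ptB, add_add_add_comm,
      CFC.posPart_add_negPart _ hσT, ← add_smul]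
    norm_num
  · rwa [CFC.posPart_add_negPart _ hωT]
  · rw [← ptB_sub, add_sub_add_left_eq_sub, CFC.posPart_sub_negPart _ hσT, ptB_ptB]

lemma le_fhat {ρ X C D M N : Matrix (A × B) (A × B) ℂ} (htr : ρ.trace = 1)
    (hC : C.PosSemidef) (hD : D.PosSemidef) (hM : M.PosSemidef) (hN : N.PosSemidef)
    (hCD : C + D = ptB M - ptB N) (hMN : (M + N).trace.re ≤ 1)
    (hblock : (fromBlocks ρ X Xᴴ (ptB C - ptB D)).PosSemidef) :
    1 / 2 * (X + Xᴴ).trace.re ≤ fhat ρ := by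
  refine le_csSup ⟨1, ?_⟩ ⟨X, C, D, M, N, hC, hD, hM, hN, hCD, hMN, hblock, rfl⟩
  rintro _ ⟨X, C, D, M, N, -, hD, -, hN, hCD, hMN, hblock, rfl⟩
  have hX := re_trace_add_conjTranspose_le hblock
  have hCD' := congrArg (fun P => P.trace.re) hCD
  simp only [trace_add, trace_sub, trace_ptB, Complex.add_re, Complex.sub_re] at hX hCD' hMN ⊢
  rw [htr, Complex.one_re] at hX
  linarith [(Complex.nonneg_iff.mp hD.trace_nonneg).1, (Complex.nonneg_iff.mp hN.trace_nonneg).1]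

lemma sqrt_fidelity_le_fhat_of_mem {ρ σ : Matrix (A × B) (A × B) ℂ} (hρ : ρ.PosSemidef)
    (htr : ρ.trace = 1) (hσ : σ ∈ PPThash2set) :
    √(fidelity ρ σ) ≤ fhat ρ := by
  obtain ⟨C, D, M, N, hC, hD, hM, hN, hCD, hMN, hσCD⟩ :=
    exists_ptB_decomposition_of_mem_PPThash2set hσ
  obtain ⟨X, hX, hXtr⟩ := exists_posSemidef_fromBlocks_re_trace_eq_sqrt_fidelity
    (nonneg_iff_posSemidef.mpr hρ) (nonneg_iff_posSemidef.mpr hσ.1)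
  have hvalue : 1 / 2 * (X + Xᴴ).trace.re = √(fidelity ρ σ) := by
    rw [trace_add, trace_conjTranspose, Complex.add_re, Complex.star_def, Complex.conj_re, hXtr]
    ring
  rw [← hvalue]
  refine le_fhat htr (nonneg_iff_posSemidef.mp hC) (nonneg_iff_posSemidef.mp hD)
    (nonneg_iff_posSemidef.mp hM) (nonneg_iff_posSemidef.mp hN) hCD hMN ?_
  rwa [hσCD]

end SDP

section MaximallyMixed

noncomputable def maximallyMixed (ι : Type*) [Fintype ι] [DecidableEq ι] : Matrix ι ι ℂ :=
  (Fintype.card ι : ℝ)⁻¹ • 1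

lemma maximallyMixed_nonneg (ι : Type*) [Fintype ι] [DecidableEq ι] : 0 ≤ maximallyMixed ι :=
  smul_nonneg (by positivity) zero_le_one

variable {A B : Type*} [Fintype A] [Fintype B] [DecidableEq A] [DecidableEq B]

lemma maximallyMixed_mem_PPThash2set [Nonempty (A × B)] :
    maximallyMixed (A × B) ∈ PPThash2set := by
  have hpt : ptB (maximallyMixed (A × B)) = maximallyMixed (A × B) := by
    rw [maximallyMixed, ptB_smul, ptB_one]
  have habs : matAbs (maximallyMixed (A × B)) = maximallyMixed (A × B) := by
    rw [matAbs_eq_cfcAbs, CFC.abs_of_nonneg _ (maximallyMixed_nonneg (A × B))]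
  refine ⟨nonneg_iff_posSemidef.mp (maximallyMixed_nonneg _), maximallyMixed (A × B), ?_, ?_⟩
  · rw [hpt, habs, sub_self]
    exact PosSemidef.zero
  · rw [traceNorm_eq_re_trace_matAbs, hpt, habs, maximallyMixed, trace_smul, trace_one,
      Complex.real_smul, Complex.re_ofReal_mul, Complex.natCast_re, inv_mul_cancel₀ (Nat.cast_ne_zero.mpr Fintype.card_ne_zero)]

lemma fidelity_maximallyMixed_pos [Nonempty (A × B)] {ρ : Matrix (A × B) (A × B) ℂ} (hρ : 0 ≤ ρ)
    (hρ0 : ρ ≠ 0) : 0 < fidelity ρ (maximallyMixed (A × B)) := by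
  have hc : 0 < (Fintype.card (A × B) : ℝ)⁻¹ := by positivity
  refine fidelity_pos hρ ?_
  rw [maximallyMixed, cfcSqrt_smul_one hc.le, smul_mul_assoc, Matrix.one_mul,
    smul_mul_smul_comm, Matrix.mul_one, Real.mul_self_sqrt hc.le]
  exact smul_ne_zero hc.ne' hρ0

end MaximallyMixed

theorem sqrt_fidelity_le_fhat {A B : Type*}
    [Fintype A] [Fintype B] [DecidableEq A] [DecidableEq B]
    (ρ : Matrix (A × B) (A × B) ℂ) (hρ : ρ.PosSemidef) (htr : ρ.trace = 1) :
    (∀ σ ∈ PPThash2set (A := A) (B := B), Real.sqrt (fidelity ρ σ) ≤ fhat ρ) ∧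
      -Real.log (sSup {x : ℝ | ∃ σ ∈ PPThash2set (A := A) (B := B), x = fidelity ρ σ}) ≥
        -2 * Real.log (fhat ρ) := by
  have hbound : ∀ σ ∈ PPThash2set (A := A) (B := B), √(fidelity ρ σ) ≤ fhat ρ :=
    fun σ hσ => sqrt_fidelity_le_fhat_of_mem hρ htr hσ
  refine ⟨hbound, ?_⟩
  have hρ0 : ρ ≠ 0 := fun h => by simp [h] at htr
  have : Nonempty (A × B) := not_isEmpty_iff.mp fun _ => hρ0 (Subsingleton.elim _ _)
  set S := {x : ℝ | ∃ σ ∈ PPThash2set (A := A) (B := B), x = fidelity ρ σ}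
  have hmixed : fidelity ρ (maximallyMixed (A × B)) ∈ S :=
    ⟨_, maximallyMixed_mem_PPThash2set, rfl⟩
  have hS : ∀ x ∈ S, x ≤ fhat ρ ^ 2 := by
    rintro _ ⟨σ, hσ, rfl⟩
    exact (Real.sqrt_le_iff.mp (hbound σ hσ)).2
  have hpos : 0 < sSup S :=
    (fidelity_maximallyMixed_pos (nonneg_iff_posSemidef.mpr hρ) hρ0).trans_le
      (le_csSup ⟨_, hS⟩ hmixed)
  have hlog := Real.log_le_log hpos (csSup_le ⟨_, hmixed⟩ hS)
  rw [Real.log_pow] at hlog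
  push_cast at hlog
  linarith
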